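/- Let q₀ be a natural number with q₀ ≥ 2, set γ = (π/4)/arctan(1/q₀), and let m = round(γ) be the integer nearest to γ. Then 0 < |π/4 − m·arctan(1/q₀)| ≤ (1/2)·arctan(1/q₀). -/

import Mathlib

/-!
Write `θ = arctan (1/q)`, so that `q + i = √(q² + 1) · e^{iθ}`. If `π/4 = n θ`, then
`(q + i)ⁿ` is a positive real multiple of `e^{iπ/4}`, so the Gaussian integer `(q + i)ⁿ` has
equal real and imaginary parts. But `(q + i)ⁿ ≡ iⁿ (mod q)`, and the real and imaginary parts
`a, b` of a power of `i` satisfy `a b = 0` and `a² + b² = 1`; equal parts would then force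
`q ∣ 2a² - (2a² - 1) = 1`. Hence `π/4 - m θ ≠ 0`, while `|π/4 - m θ| = θ |γ - round γ| ≤ θ/2`.
-/

open Real

lemma GaussianInt.dvd_pow_re_mul_im_and_dvd_pow_norm_sub_one (q : ℤ) (n : ℕ) :
    q ∣ ((⟨q, 1⟩ : GaussianInt) ^ n).re * ((⟨q, 1⟩ : GaussianInt) ^ n).im ∧
    q ∣ ((⟨q, 1⟩ : GaussianInt) ^ n).re ^ 2 + ((⟨q, 1⟩ : GaussianInt) ^ n).im ^ 2 - 1 := by
  induction n with
  | zero => simp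
  | succ n ih =>
    obtain ⟨h_mul, h_sq⟩ := ih
    set a := ((⟨q, 1⟩ : GaussianInt) ^ n).re
    set b := ((⟨q, 1⟩ : GaussianInt) ^ n).im
    have hre : ((⟨q, 1⟩ : GaussianInt) ^ (n + 1)).re = a * q - b := by
      rw [pow_succ, Zsqrtd.re_mul]; ring
    have him : ((⟨q, 1⟩ : GaussianInt) ^ (n + 1)).im = a + b * q := by
      rw [pow_succ, Zsqrtd.im_mul]; ring
    rw [hre, him]
    constructor
    · rw [show (a * q - b) * (a + b * q) = q * (a ^ 2 - b ^ 2) + (q ^ 2 - 1) * (a * b) by ring]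
      exact dvd_add (dvd_mul_right _ _) (h_mul.mul_left _)
    · rw [show (a * q - b) ^ 2 + (a + b * q) ^ 2 - 1 = (q ^ 2 + 1) * (a ^ 2 + b ^ 2 - 1) + q * q by
        ring]
      exact dvd_add (h_sq.mul_left _) (dvd_mul_right _ _)

lemma GaussianInt.pow_re_ne_im {q : ℤ} (hq : ¬IsUnit q) (n : ℕ) :
    ((⟨q, 1⟩ : GaussianInt) ^ n).re ≠ ((⟨q, 1⟩ : GaussianInt) ^ n).im := by
  intro h
  obtain ⟨h_mul, h_sq⟩ := GaussianInt.dvd_pow_re_mul_im_and_dvd_pow_norm_sub_one q n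
  set a := ((⟨q, 1⟩ : GaussianInt) ^ n).re
  rw [← h] at h_mul h_sq
  apply hq
  rw [isUnit_iff_dvd_one,
    show (1 : ℤ) = 2 * (a * a) - (a ^ 2 + a ^ 2 - 1) by ring]
  exact dvd_sub (h_mul.mul_left _) h_sq

namespace Complex

lemma one_add_mul_I_eq_sqrt_mul_exp_arctan (x : ℝ) :
    (1 + x * I : ℂ) = √(1 + x ^ 2) * exp (Real.arctan x * I) := by
  have hs : √(1 + x ^ 2) ≠ 0 := (sqrt_pos.2 (by positivity)).ne'
  apply Complex.ext <;>
    simp [-ofReal_arctan, exp_ofReal_mul_I_re, exp_ofReal_mul_I_im, Real.cos_arctan,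
      Real.sin_arctan, mul_div_cancel₀ _ hs, mul_inv_cancel₀ hs]

end Complex

lemma pi_div_four_ne_nat_mul_arctan_inv {q : ℕ} (hq : 2 ≤ q) (n : ℕ) :
    π / 4 ≠ n * arctan (1 / q) := by
  intro h
  have hq0 : (q : ℂ) ≠ 0 := by exact_mod_cast (show q ≠ 0 by omega)
  have hpow : (((⟨q, 1⟩ : GaussianInt) ^ n : GaussianInt) : ℂ) =
      ((q * √(1 + (1 / q : ℝ) ^ 2)) ^ n : ℝ) * Complex.exp ((n * arctan (1 / q) : ℝ) * Complex.I) := by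
    have hz : (((⟨q, 1⟩ : GaussianInt)) : ℂ) = q * (1 + ((1 / q : ℝ) : ℂ) * Complex.I) := by
      rw [GaussianInt.toComplex_def]; push_cast; field_simp
    rw [map_pow, hz, Complex.one_add_mul_I_eq_sqrt_mul_exp_arctan, ← mul_assoc, mul_pow,
      ← Complex.exp_nat_mul]
    push_cast
    ring_nf
  have hre_eq_im : (((⟨q, 1⟩ : GaussianInt) ^ n : GaussianInt) : ℂ).re =
      (((⟨q, 1⟩ : GaussianInt) ^ n : GaussianInt) : ℂ).im := by
    rw [hpow, ← h, Complex.re_ofReal_mul, Complex.im_ofReal_mul, Complex.exp_ofReal_mul_I_re,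
      Complex.exp_ofReal_mul_I_im, cos_pi_div_four, sin_pi_div_four]
  rw [← GaussianInt.intCast_re, ← GaussianInt.intCast_im] at hre_eq_im
  refine GaussianInt.pow_re_ne_im (q := q) ?_ n (by exact_mod_cast hre_eq_im)
  rw [Int.isUnit_iff]
  omega

lemma pi_div_four_ne_int_mul_arctan_inv {q : ℕ} (hq : 2 ≤ q) (m : ℤ) :
    π / 4 ≠ m * arctan (1 / q) := by
  rcases le_or_gt m 0 with hm | hm
  · have hθ : 0 < arctan (1 / q) := arctan_pos.2 (by positivity)
    have : (m : ℝ) * arctan (1 / q) ≤ 0 :=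
      mul_nonpos_of_nonpos_of_nonneg (by exact_mod_cast hm) hθ.le
    linarith [pi_pos]
  · lift m to ℕ using hm.le
    exact_mod_cast pi_div_four_ne_nat_mul_arctan_inv hq m

/-- For `q₀ ≥ 2`, `γ = (π/4)/arctan(1/q₀)` and `m = round γ` the nearest integer to `γ`:
`0 < |π/4 − m·arctan(1/q₀)| ≤ (1/2)·arctan(1/q₀)`. -/
theorem round_remainder_bound (q₀ : ℕ) (hq₀ : 2 ≤ q₀)
    (γ : ℝ) (hγ : γ = (Real.pi / 4) / Real.arctan (1 / (q₀ : ℝ)))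
    (m : ℤ) (hm : m = round γ) :
    0 < |Real.pi / 4 - (m : ℝ) * Real.arctan (1 / (q₀ : ℝ))| ∧
    |Real.pi / 4 - (m : ℝ) * Real.arctan (1 / (q₀ : ℝ))| ≤
      (1 / 2) * Real.arctan (1 / (q₀ : ℝ)) := by
  set θ := arctan (1 / (q₀ : ℝ))
  have hθ : 0 < θ := arctan_pos.2 (by positivity)
  have hγθ : π / 4 = γ * θ := by
    rw [hγ]; field_simp
  have hremainder : π / 4 - m * θ = θ * (γ - round γ) := by
    rw [hγθ, hm]; ring
  refine ⟨abs_pos.2 (sub_ne_zero.2 (pi_div_four_ne_int_mul_arctan_inv hq₀ m)), ?_⟩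
  rw [hremainder, abs_mul, abs_of_pos hθ, mul_comm]
  exact mul_le_mul_of_nonneg_right (abs_sub_round γ) hθ.le
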